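/- arXiv:2603.29720 — 2 statements merged into one kernel-verified Lean document; each statement's English description precedes it below -/
import Mathlib

section
/- Let (X,T) be a topological dynamical system. For every T-invariant Borel probability measure μ on X, h̃_μ(T) ≤ h_μ(T), i.e. for every continuous partition of unity Φ on X one has h̃_μ(T,Φ) ≤ h_μ(T), the Kolmogorov–Sinai entropy of (T,μ). -/
open MeasureTheory Filter Set

/-! ### Partitions of unity -/

/-- A finite partition of unity on `X`: a finite family of functions `X → [0,1]`
summing to `1` everywhere. -/
structure PartUnity (X : Type*) where
  n : ℕ
  f : Fin n → X → ℝ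
  nonneg : ∀ i x, 0 ≤ f i x
  le_one : ∀ i x, f i x ≤ 1
  sum_one : ∀ x, ∑ i, f i x = 1

namespace PartUnity

variable {X Y : Type*}

/-- A continuous partition of unity. -/
def Cont [TopologicalSpace X] (Φ : PartUnity X) : Prop := ∀ i, Continuous (Φ.f i)

/-- A measurable partition of unity. -/
def Meas [MeasurableSpace X] (Φ : PartUnity X) : Prop := ∀ i, Measurable (Φ.f i)

/-- A positive partition of unity. -/
def Pos (Φ : PartUnity X) : Prop := ∀ i x, 0 < Φ.f i x

/-- The join `Φ ∨ Ψ = {φ·ψ : φ ∈ Φ, ψ ∈ Ψ}` of two partitions of unity. -/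
def join (Φ Ψ : PartUnity X) : PartUnity X where
  n := Φ.n * Ψ.n
  f k x := Φ.f (finProdFinEquiv.symm k).1 x * Ψ.f (finProdFinEquiv.symm k).2 x
  nonneg k x := mul_nonneg (Φ.nonneg _ x) (Ψ.nonneg _ x)
  le_one k x := mul_le_one₀ (Φ.le_one _ x) (Ψ.nonneg _ x) (Ψ.le_one _ x)
  sum_one x := by
    rw [← Equiv.sum_comp (finProdFinEquiv : Fin Φ.n × Fin Ψ.n ≃ Fin (Φ.n * Ψ.n))
      (fun k => Φ.f (finProdFinEquiv.symm k).1 x * Ψ.f (finProdFinEquiv.symm k).2 x)]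
    simp only [Equiv.symm_apply_apply]
    rw [Fintype.sum_prod_type]
    dsimp only
    rw [← Finset.sum_mul_sum, Φ.sum_one x, Ψ.sum_one x, one_mul]

/-- Pull back a partition of unity by a map: `TΦ = {φ ∘ T : φ ∈ Φ}`. -/
def comp (Φ : PartUnity X) (T : Y → X) : PartUnity Y where
  n := Φ.n
  f i y := Φ.f i (T y)
  nonneg i y := Φ.nonneg i (T y)
  le_one i y := Φ.le_one i (T y)
  sum_one y := Φ.sum_one (T y)

/-- The trivial partition of unity `{1}`. -/
def triv (X : Type*) : PartUnity X where
  n := 1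
  f _ _ := 1
  nonneg _ _ := zero_le_one
  le_one _ _ := le_rfl
  sum_one _ := by simp

/-- `dyn T Φ n` is the dynamical join `Φ₀ⁿ⁻¹ = ⋁_{i=0}^{n-1} TⁱΦ`
(joined with a harmless trivial factor). -/
def dyn (T : X → X) (Φ : PartUnity X) : ℕ → PartUnity X
  | 0 => triv X
  | n + 1 => Φ.join ((dyn T Φ n).comp T)

/-- The product partition of unity `Φ ⊗ Ψ` on `X × Y`. -/
def prod (Φ : PartUnity X) (Ψ : PartUnity Y) : PartUnity (X × Y) where
  n := Φ.n * Ψ.n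
  f k p := Φ.f (finProdFinEquiv.symm k).1 p.1 * Ψ.f (finProdFinEquiv.symm k).2 p.2
  nonneg k p := mul_nonneg (Φ.nonneg _ _) (Ψ.nonneg _ _)
  le_one k p := mul_le_one₀ (Φ.le_one _ _) (Ψ.nonneg _ _) (Ψ.le_one _ _)
  sum_one p := by
    rw [← Equiv.sum_comp (finProdFinEquiv : Fin Φ.n × Fin Ψ.n ≃ Fin (Φ.n * Ψ.n))
      (fun k => Φ.f (finProdFinEquiv.symm k).1 p.1 * Ψ.f (finProdFinEquiv.symm k).2 p.2)]
    simp only [Equiv.symm_apply_apply]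
    rw [Fintype.sum_prod_type]
    dsimp only
    rw [← Finset.sum_mul_sum, Φ.sum_one p.1, Ψ.sum_one p.2, one_mul]

/-- The diameter of a partition of unity: the maximum of the diameters of the
supports of its members. -/
noncomputable def diam [PseudoMetricSpace X] (Φ : PartUnity X) : ℝ :=
  ⨆ i, Metric.diam (tsupport (Φ.f i))

end PartUnity

/-! ### Metric entropy via partitions of unity -/

variable {X Y : Type*}

/-- The static entropy `H̃_μ(Φ) = Σ_φ ( −μ(φ) log μ(φ) + μ(φ log φ) )`. -/
noncomputable def statEnt [MeasurableSpace X] (μ : Measure X) (Φ : PartUnity X) : ℝ :=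
  ∑ i, (-((∫ x, Φ.f i x ∂μ) * Real.log (∫ x, Φ.f i x ∂μ)) +
    ∫ x, Φ.f i x * Real.log (Φ.f i x) ∂μ)

/-- The conditional measure `μ_ψ`, determined by `μ_ψ(φ) = μ(φψ)/μ(ψ)`. -/
noncomputable def condMeas [MeasurableSpace X] (μ : Measure X) (ψ : X → ℝ) : Measure X :=
  (ENNReal.ofReal (∫ x, ψ x ∂μ))⁻¹ • μ.withDensity (fun x => ENNReal.ofReal (ψ x))

/-- The conditional static entropy `H̃_μ(Φ | Ψ) = Σ_ψ μ(ψ) H̃_{μ_ψ}(Φ)`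
(terms with `μ(ψ) = 0` vanish since they are multiplied by `μ(ψ) = 0`). -/
noncomputable def condStatEnt [MeasurableSpace X] (μ : Measure X) (Φ Ψ : PartUnity X) : ℝ :=
  ∑ j, (∫ x, Ψ.f j x ∂μ) * statEnt (condMeas μ (Ψ.f j)) Φ

/-- The local metric entropy `h̃_μ(T,Φ) = lim_n H̃_μ(Φ₀ⁿ⁻¹)/n`. -/
noncomputable def locEnt [MeasurableSpace X] (T : X → X) (μ : Measure X) (Φ : PartUnity X) : ℝ :=
  Filter.atTop.limsup fun n : ℕ => statEnt μ (PartUnity.dyn T Φ n) / (n : ℝ)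

/-- The local conditional metric entropy `h̃_μ(T,Φ|Ψ) = lim_n H̃_μ(Φ₀ⁿ⁻¹|Ψ₀ⁿ⁻¹)/n`. -/
noncomputable def condLocEnt [MeasurableSpace X] (T : X → X) (μ : Measure X)
    (Φ Ψ : PartUnity X) : ℝ :=
  Filter.atTop.limsup fun n : ℕ =>
    condStatEnt μ (PartUnity.dyn T Φ n) (PartUnity.dyn T Ψ n) / (n : ℝ)

/-- The metric entropy `h̃_μ(T)`: supremum of `h̃_μ(T,Φ)` over continuous
partitions of unity. -/
noncomputable def metEnt [TopologicalSpace X] [MeasurableSpace X]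
    (T : X → X) (μ : Measure X) : EReal :=
  ⨆ Φ : {Φ : PartUnity X // Φ.Cont}, ((locEnt T μ Φ.1 : ℝ) : EReal)

/-! ### Topological entropy via partitions of unity -/

/-- The topological static entropy `H̃(Φ) = Σ_φ sup φ`. -/
noncomputable def topStat (Φ : PartUnity X) : ℝ := ∑ i, ⨆ x, Φ.f i x

/-- The local topological entropy `h̃(T,Φ) = lim_n (1/n) log H̃(Φ₀ⁿ⁻¹)`. -/
noncomputable def topLocEnt (T : X → X) (Φ : PartUnity X) : ℝ :=
  Filter.atTop.limsup fun n : ℕ => Real.log (topStat (PartUnity.dyn T Φ n)) / (n : ℝ)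

/-- The topological entropy `h̃_top(T)`: supremum of `h̃(T,Φ)` over continuous
partitions of unity. -/
noncomputable def topEnt [TopologicalSpace X] (T : X → X) : EReal :=
  ⨆ Φ : {Φ : PartUnity X // Φ.Cont}, ((topLocEnt T Φ.1 : ℝ) : EReal)

/-! ### Classical Kolmogorov–Sinai entropy -/

/-- A finite Borel partition of `X` (indexed; atoms may be empty). -/
structure FinBorelPart (X : Type*) [MeasurableSpace X] where
  n : ℕ
  A : Fin n → Set X
  meas : ∀ i, MeasurableSet (A i)
  disj : ∀ i j, i ≠ j → Disjoint (A i) (A j)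
  cover : ⋃ i, A i = Set.univ

/-- Local Kolmogorov–Sinai entropy `h_μ(T,𝒜) = lim_n (1/n) Σ_{A ∈ 𝒜₀ⁿ⁻¹} −μ(A) log μ(A)`. -/
noncomputable def ksLocEnt [MeasurableSpace X] (T : X → X) (μ : Measure X)
    (P : FinBorelPart X) : ℝ :=
  Filter.atTop.limsup fun n : ℕ =>
    (∑ σ : Fin n → Fin P.n,
      Real.negMulLog (μ (⋂ i : Fin n, T^[(i : ℕ)] ⁻¹' P.A (σ i))).toReal) / (n : ℝ)

/-- The Kolmogorov–Sinai metric entropy `h_μ(T)`. -/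
noncomputable def ksEnt [MeasurableSpace X] (T : X → X) (μ : Measure X) : EReal :=
  ⨆ P : FinBorelPart X, ((ksLocEnt T μ P : ℝ) : EReal)

/-! ### Classical topological entropy via open covers -/

/-- A finite open cover of `X`. -/
structure FinOpenCover (X : Type*) [TopologicalSpace X] where
  n : ℕ
  U : Fin n → Set X
  opn : ∀ i, IsOpen (U i)
  cov : ⋃ i, U i = Set.univ

/-- The member `⋂_{i<n} T^{-i} U_{σ(i)}` of the dynamical refinement of a cover. -/
def dynSet (T : X → X) {m : ℕ} (U : Fin m → Set X) (n : ℕ) (σ : Fin n → Fin m) : Set X :=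
  ⋂ i : Fin n, T^[(i : ℕ)] ⁻¹' U (σ i)

/-- Minimal cardinality of a subfamily of `V` covering `S`. -/
noncomputable def coverNum {α : Type*} [Fintype α] (V : α → Set X) (S : Set X) : ℕ :=
  sInf {k | ∃ t : Finset α, t.card = k ∧ S ⊆ ⋃ i ∈ t, V i}

/-- The local classical topological entropy `h(T,𝒰)` of an open cover. -/
noncomputable def covLocEnt [TopologicalSpace X] (T : X → X) (C : FinOpenCover X) : ℝ :=
  Filter.atTop.limsup fun n : ℕ =>
    Real.log ((coverNum (fun σ : Fin n → Fin C.n => dynSet T C.U n σ) Set.univ : ℕ) : ℝ) / (n : ℝ)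

/-- The classical topological entropy `h_top(T)` via open covers. -/
noncomputable def topEntCov [TopologicalSpace X] (T : X → X) : EReal :=
  ⨆ C : FinOpenCover X, ((covLocEnt T C : ℝ) : EReal)

/-! ### Misiurewicz topological tail entropy -/

/-- The local conditional topological entropy `h(𝒰|𝒱)` of two open covers. -/
noncomputable def misCondLoc [TopologicalSpace X] (T : X → X) (CU CV : FinOpenCover X) : ℝ :=
  Filter.atTop.limsup fun n : ℕ =>
    Real.log (((⨆ τ : Fin n → Fin CV.n,
      coverNum (fun σ : Fin n → Fin CU.n => dynSet T CU.U n σ) (dynSet T CV.U n τ) : ℕ)) : ℝ) / (n : ℝ)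

/-- The conditional topological entropy `h(T|𝒱) = sup_𝒰 h(𝒰|𝒱)`. -/
noncomputable def misCond [TopologicalSpace X] (T : X → X) (CV : FinOpenCover X) : EReal :=
  ⨆ CU : FinOpenCover X, ((misCondLoc T CU CV : ℝ) : EReal)

/-- Misiurewicz's topological tail entropy `h*(T) = inf_𝒱 h(T|𝒱)`. -/
noncomputable def misTail [TopologicalSpace X] (T : X → X) : EReal :=
  ⨅ CV : FinOpenCover X, misCond T CV

/-! ### Topological tail entropy via partitions of unity -/

/-- `H̃(Φ|ψ) = Σ_φ sup_{supp ψ} φ`. -/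
noncomputable def condTopStatPU [TopologicalSpace X] (Φ : PartUnity X) (ψ : X → ℝ) : ℝ :=
  ∑ i, ⨆ x ∈ tsupport ψ, Φ.f i x

/-- The weight set `D(Ψ) = {a : inf ψ ≤ a_ψ ≤ sup ψ, Σ a_ψ = 1}`. -/
def weights (Ψ : PartUnity X) : Set (Fin Ψ.n → ℝ) :=
  {a | (∀ j, (⨅ x, Ψ.f j x) ≤ a j ∧ a j ≤ ⨆ x, Ψ.f j x) ∧ ∑ j, a j = 1}

/-- `H̃_n(Φ|Ψ) = sup_{a ∈ D(Ψ₀ⁿ⁻¹)} Σ_ψ a_ψ H̃(Φ₀ⁿ⁻¹|ψ)`. -/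
noncomputable def tailStat [TopologicalSpace X] (T : X → X) (Φ Ψ : PartUnity X) (n : ℕ) : ℝ :=
  sSup {r | ∃ a ∈ weights (PartUnity.dyn T Ψ n),
    r = ∑ j, a j * condTopStatPU (PartUnity.dyn T Φ n) ((PartUnity.dyn T Ψ n).f j)}

/-- The local conditional topological entropy `h̃(Φ|Ψ) = limsup_n (1/n) log H̃_n(Φ|Ψ)`. -/
noncomputable def tailLoc [TopologicalSpace X] (T : X → X) (Φ Ψ : PartUnity X) : ℝ :=
  Filter.atTop.limsup fun n : ℕ => Real.log (tailStat T Φ Ψ n) / (n : ℝ)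

/-- The conditional topological entropy `h̃(T|Ψ) = sup_Φ h̃(Φ|Ψ)` over continuous `Φ`. -/
noncomputable def condTopEntPU [TopologicalSpace X] (T : X → X) (Ψ : PartUnity X) : EReal :=
  ⨆ Φ : {Φ : PartUnity X // Φ.Cont}, ((tailLoc T Φ.1 Ψ : ℝ) : EReal)

/-- The topological tail entropy `h̃*(T) = inf_Ψ h̃(T|Ψ)` over continuous `Ψ`. -/
noncomputable def tailEntPU [TopologicalSpace X] (T : X → X) : EReal :=
  ⨅ Ψ : {Ψ : PartUnity X // Ψ.Cont}, condTopEntPU T Ψ.1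

/-! ### Pressures -/

/-- The Birkhoff sum `S_n g = Σ_{i<n} g ∘ Tⁱ`. -/
def birkhoff (T : X → X) (g : X → ℝ) (n : ℕ) (x : X) : ℝ :=
  ∑ i ∈ Finset.range n, g (T^[i] x)

/-- The static pressure `P̃(T,g,Φ,n) = Σ_{φ ∈ Φ₀ⁿ⁻¹} sup (φ e^{S_n g})`. -/
noncomputable def puPressStat (T : X → X) (g : X → ℝ) (Φ : PartUnity X) (n : ℕ) : ℝ :=
  ∑ i, ⨆ x, (PartUnity.dyn T Φ n).f i x * Real.exp (birkhoff T g n x)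

/-- The local topological pressure `P̃_top(T,g,Φ) = lim_n (1/n) log P̃(T,g,Φ,n)`. -/
noncomputable def puLocPress (T : X → X) (g : X → ℝ) (Φ : PartUnity X) : ℝ :=
  Filter.atTop.limsup fun n : ℕ => Real.log (puPressStat T g Φ n) / (n : ℝ)

/-- The topological pressure `P̃_top(T,g)` via continuous partitions of unity. -/
noncomputable def puTopPress [TopologicalSpace X] (T : X → X) (g : X → ℝ) : EReal :=
  ⨆ Φ : {Φ : PartUnity X // Φ.Cont}, ((puLocPress T g Φ.1 : ℝ) : EReal)

/-- The classical static pressure of an open cover: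
`inf { Σ_{V ∈ 𝒱} sup_V e^{S_n g} : 𝒱 a subcover of 𝒰₀ⁿ⁻¹ }`. -/
noncomputable def covPressStat [TopologicalSpace X] (T : X → X) (g : X → ℝ)
    (C : FinOpenCover X) (n : ℕ) : ℝ :=
  sInf {r | ∃ t : Finset (Fin n → Fin C.n),
    (Set.univ ⊆ ⋃ σ ∈ t, dynSet T C.U n σ) ∧
    r = ∑ σ ∈ t, ⨆ x ∈ dynSet T C.U n σ, Real.exp (birkhoff T g n x)}

/-- The local classical topological pressure of an open cover. -/
noncomputable def covLocPress [TopologicalSpace X] (T : X → X) (g : X → ℝ)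
    (C : FinOpenCover X) : ℝ :=
  Filter.atTop.limsup fun n : ℕ => Real.log (covPressStat T g C n) / (n : ℝ)

/-- The classical topological pressure `P_top(T,g)` via open covers. -/
noncomputable def topPress [TopologicalSpace X] (T : X → X) (g : X → ℝ) : EReal :=
  ⨆ C : FinOpenCover X, ((covLocPress T g C : ℝ) : EReal)

/-! ### Topological tail pressure -/

/-- `P̃_n(T,g,Φ|Ψ) = sup_{a ∈ D(Ψ₀ⁿ⁻¹)} Σ_ψ a_ψ Σ_φ sup_{supp ψ} (φ e^{S_n g})`. -/
noncomputable def tailPressStat [TopologicalSpace X] (T : X → X) (g : X → ℝ)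
    (Φ Ψ : PartUnity X) (n : ℕ) : ℝ :=
  sSup {r | ∃ a ∈ weights (PartUnity.dyn T Ψ n),
    r = ∑ j, a j * ∑ i, ⨆ x ∈ tsupport ((PartUnity.dyn T Ψ n).f j),
      (PartUnity.dyn T Φ n).f i x * Real.exp (birkhoff T g n x)}

/-- The local topological tail pressure `P̃(T,g,Φ|Ψ) = limsup_n (1/n) log P̃_n(T,g,Φ|Ψ)`. -/
noncomputable def tailLocPress [TopologicalSpace X] (T : X → X) (g : X → ℝ)
    (Φ Ψ : PartUnity X) : ℝ :=
  Filter.atTop.limsup fun n : ℕ => Real.log (tailPressStat T g Φ Ψ n) / (n : ℝ)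

/-- The conditional topological pressure `P̃(T,g|Ψ) = sup_Φ P̃(T,g,Φ|Ψ)` over continuous `Φ`. -/
noncomputable def condTopPressPU [TopologicalSpace X] (T : X → X) (g : X → ℝ)
    (Ψ : PartUnity X) : EReal :=
  ⨆ Φ : {Φ : PartUnity X // Φ.Cont}, ((tailLocPress T g Φ.1 Ψ : ℝ) : EReal)

/-- The topological tail pressure `P̃*(T,g) = inf_Ψ P̃(T,g|Ψ)` over continuous `Ψ`. -/
noncomputable def puTailPress [TopologicalSpace X] (T : X → X) (g : X → ℝ) : EReal :=
  ⨅ Ψ : {Ψ : PartUnity X // Ψ.Cont}, condTopPressPU T g Ψ.1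

/-! ### Classical topological tail pressure (Li–Chen–Cheng) -/

/-- The Bowen ball `B(x,ε,n) = {y : d(Tⁱx,Tⁱy) < ε for all 0 ≤ i < n}`. -/
def bowenBall [PseudoMetricSpace X] (T : X → X) (x : X) (ε : ℝ) (n : ℕ) : Set X :=
  {y | ∀ i < n, dist (T^[i] x) (T^[i] y) < ε}

/-- `E` is `(n,δ)`-separated: distinct points `y,z ∈ E` satisfy `d(Tⁱy,Tⁱz) > δ`
for some `0 ≤ i < n`. -/
def IsSep [PseudoMetricSpace X] (T : X → X) (n : ℕ) (δ : ℝ) (E : Finset X) : Prop :=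
  ∀ y ∈ E, ∀ z ∈ E, y ≠ z → ∃ i < n, δ < dist (T^[i] y) (T^[i] z)

/-- `P_n(T,g,δ,ε) = sup_x sup { Σ_{y∈E} e^{S_n g(y)} : E (n,δ)-separated ⊆ B(x,ε,n) }`. -/
noncomputable def sepPress [PseudoMetricSpace X] (T : X → X) (g : X → ℝ)
    (n : ℕ) (δ ε : ℝ) : ℝ :=
  ⨆ x : X, sSup {r | ∃ E : Finset X, ↑E ⊆ bowenBall T x ε n ∧ IsSep T n δ E ∧
    r = ∑ y ∈ E, Real.exp (birkhoff T g n y)}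

/-- The classical topological tail pressure
`P*(T,g) = lim_{ε→0} lim_{δ→0} limsup_n (1/n) log P_n(T,g,δ,ε)`
(the inner limits are monotone, hence given by `inf_ε sup_δ`). -/
noncomputable def tailPress [PseudoMetricSpace X] (T : X → X) (g : X → ℝ) : EReal :=
  ⨅ ε : {ε : ℝ // 0 < ε}, ⨆ δ : {δ : ℝ // 0 < δ},
    Filter.atTop.limsup fun n : ℕ => ((Real.log (sepPress T g n δ.1 ε.1) / (n : ℝ) : ℝ) : EReal)


/-!
Fix `κ > 0`, let `ω` be a modulus of continuity of `η(t) = -t log t` on `[0, 1]` for `κ`, and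
choose a finite Borel partition `𝒜` on whose atoms every `φ ∈ Φ` oscillates by at most `ω`
(level sets of the `φ` will do). On a cylinder `C` of `𝒜₀ⁿ⁻¹` each `φ ∘ Tⁱ` is then nearly
constant, which gives
`Σ_φ η(μ(φ ∘ Tⁱ · 1_C)) ≤ Σ_φ μ(η(φ ∘ Tⁱ) · 1_C) + η(μ C) + |Φ| κ μ(C)`.
Splitting `μ` over the cylinders (`η` is subadditive) and using subadditivity of entropy over
the `n` coordinates of the join `Φ₀ⁿ⁻¹` turns this into `H̃_μ(Φ₀ⁿ⁻¹) ≤ H_μ(𝒜₀ⁿ⁻¹) + n |Φ| κ`.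
Hence `h̃_μ(T,Φ) ≤ h_μ(T,𝒜) + |Φ| κ`, and `κ` is arbitrary.
-/

open Real Finset

section FiniteEntropy

variable {α ι κ : Type*}

lemma Real.negMulLog_add_le {a b : ℝ} (ha : 0 ≤ a) (hb : 0 ≤ b) :
    negMulLog (a + b) ≤ negMulLog a + negMulLog b := by
  rcases ha.eq_or_lt with rfl | ha
  · simp
  rcases hb.eq_or_lt with rfl | hb
  · simp
  have la : log a ≤ log (a + b) := log_le_log ha (by linarith)
  have lb : log b ≤ log (a + b) := log_le_log hb (by linarith)
  simp only [negMulLog]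
  nlinarith

lemma Real.negMulLog_sum_le (s : Finset α) {p : α → ℝ} (hp : ∀ a ∈ s, 0 ≤ p a) :
    negMulLog (∑ a ∈ s, p a) ≤ ∑ a ∈ s, negMulLog (p a) :=
  le_sum_of_subadditive_on_pred negMulLog (0 ≤ ·) (by simp)
    (fun _ _ => negMulLog_add_le) (fun _ _ => add_nonneg) p hp

lemma Real.sum_negMulLog_le_sum_neg_mul_log (s : Finset α) {p q : α → ℝ}
    (hp : ∀ a ∈ s, 0 ≤ p a) (hq : ∀ a ∈ s, 0 ≤ q a) (hqp : ∑ a ∈ s, q a ≤ ∑ a ∈ s, p a)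
    (hq0 : ∀ a ∈ s, q a = 0 → p a = 0) :
    ∑ a ∈ s, negMulLog (p a) ≤ ∑ a ∈ s, -(p a * log (q a)) := by
  have key : ∀ a ∈ s, negMulLog (p a) - -(p a * log (q a)) ≤ q a - p a := by
    intro a ha
    rcases (hp a ha).eq_or_lt with h | hpa
    · simp [← h, hq a ha]
    have hqa : 0 < q a := (hq a ha).lt_of_ne fun h => hpa.ne' (hq0 a ha h.symm)
    have hlog := log_le_sub_one_of_pos (div_pos hqa hpa)
    rw [log_div hqa.ne' hpa.ne'] at hlog
    have : p a * (log (q a) - log (p a)) ≤ q a - p a := by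
      rw [← le_div_iff₀' hpa]; linarith [show (q a - p a) / p a = q a / p a - 1 by field_simp]
    simp only [negMulLog]
    linarith
  have := sum_le_sum key
  rw [sum_sub_distrib, sum_sub_distrib] at this
  linarith

lemma Real.sum_negMulLog_le_log_card [Fintype α] {p : α → ℝ} (hp : ∀ a, 0 ≤ p a)
    (hp1 : ∑ a, p a = 1) : ∑ a, negMulLog (p a) ≤ log (Fintype.card α) := by
  have hcard : (0 : ℝ) < Fintype.card α := by
    have : Nonempty α := by
      by_contra h
      simp [not_nonempty_iff.mp h] at hp1
    exact_mod_cast Fintype.card_pos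
  calc ∑ a, negMulLog (p a) ≤ ∑ a, -(p a * log (Fintype.card α : ℝ)⁻¹) :=
        sum_negMulLog_le_sum_neg_mul_log _ (fun a _ => hp a) (fun _ _ => by positivity)
          (by simp [hp1, hcard.ne']) (fun _ _ h => absurd h (by positivity))
    _ = log (Fintype.card α) := by simp [log_inv, ← sum_mul, hp1]

variable [Fintype ι] [DecidableEq ι] [Fintype κ] [DecidableEq κ]

lemma Finset.sum_mul_apply_eq_sum_mul_sum_filter {R : Type*} [CommSemiring R] (F : (ι → κ) → R)
    (c : κ → R) (i : ι) :
    ∑ σ : ι → κ, F σ * c (σ i) = ∑ j, c j * ∑ σ with σ i = j, F σ := by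
  rw [← sum_fiberwise univ (fun σ : ι → κ => σ i)]
  refine sum_congr rfl fun j _ => ?_
  rw [mul_sum]
  exact sum_congr rfl fun σ hσ => by rw [(mem_filter.mp hσ).2, mul_comm]

lemma Finset.sum_filter_prod_eq {R : Type*} [CommSemiring R] {p : ι → κ → R}
    (hp : ∀ i, ∑ j, p i j = 1) (i₀ : ι) (j₀ : κ) :
    ∑ σ : ι → κ with σ i₀ = j₀, ∏ i, p i (σ i) = p i₀ j₀ := by
  set q : ι → κ → R := fun i j => if i = i₀ ∧ j ≠ j₀ then 0 else p i j
  have hq : ∀ σ : ι → κ, ∏ i, q i (σ i) = if σ i₀ = j₀ then ∏ i, p i (σ i) else 0 := by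
    intro σ
    split_ifs with hσ
    · refine prod_congr rfl fun i _ => if_neg ?_
      rintro ⟨rfl, h⟩
      exact h hσ
    · exact prod_eq_zero (mem_univ i₀) (by simp [q, hσ])
  rw [sum_filter, ← sum_congr rfl fun σ _ => hq σ, ← Fintype.prod_sum, prod_eq_single i₀]
  · simp [q]
  · intro i _ hi
    simp [q, hi, hp i]
  · simp

lemma Real.sum_negMulLog_prod {p : ι → κ → ℝ} (hp1 : ∀ i, ∑ j, p i j = 1) :
    ∑ σ : ι → κ, negMulLog (∏ i, p i (σ i)) = ∑ i, ∑ j, negMulLog (p i j) := by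
  have hexpand : ∀ σ : ι → κ,
      negMulLog (∏ i, p i (σ i)) = ∑ i, (∏ l, p l (σ l)) * -log (p i (σ i)) := by
    intro σ
    by_cases h : ∃ i, p i (σ i) = 0
    · obtain ⟨i, hi⟩ := h
      simp [prod_eq_zero (mem_univ i) hi (f := fun i => p i (σ i))]
    · push Not at h
      rw [negMulLog, log_prod fun i _ => h i, mul_sum]
      exact sum_congr rfl fun i _ => by ring
  rw [sum_congr rfl fun σ _ => hexpand σ, sum_comm]
  refine sum_congr rfl fun i _ => ?_
  rw [sum_mul_apply_eq_sum_mul_sum_filter (fun σ => ∏ l, p l (σ l)) (fun j => -log (p i j))]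
  exact sum_congr rfl fun j _ => by rw [sum_filter_prod_eq hp1, negMulLog]; ring

lemma Real.sum_negMulLog_le_sum_marginal [Nonempty ι] {P : (ι → κ) → ℝ} (hP : ∀ σ, 0 ≤ P σ) :
    ∑ σ, negMulLog (P σ) ≤ ∑ i, ∑ j, negMulLog (∑ σ with σ i = j, P σ)
      - (Fintype.card ι - 1 : ℝ) * negMulLog (∑ σ, P σ) := by
  set m := ∑ σ, P σ
  set M : ι → κ → ℝ := fun i j => ∑ σ with σ i = j, P σ
  have hM : ∀ i j, 0 ≤ M i j := fun i j => sum_nonneg fun σ _ => hP σ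
  have hMsum : ∀ i, ∑ j, M i j = m := fun i => sum_fiberwise univ (fun σ : ι → κ => σ i) P
  have hPM : ∀ σ i, P σ ≤ M i (σ i) := fun σ i =>
    single_le_sum (fun σ' _ => hP σ') (mem_filter.mpr ⟨mem_univ σ, rfl⟩)
  rcases (sum_nonneg fun σ _ => hP σ : 0 ≤ m).eq_or_lt with hm | hm
  · have hP0 : ∀ σ, P σ = 0 := fun σ =>
      (sum_eq_zero_iff_of_nonneg fun σ _ => hP σ).mp hm.symm σ (mem_univ σ)
    simp [hP0, show m = 0 from hm.symm]
  set c := Fintype.card ι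
  have hc : 1 ≤ c := Fintype.card_pos
  -- compare `P` with the product of its marginals, rescaled to total mass `m`
  set q : (ι → κ) → ℝ := fun σ => (∏ i, M i (σ i)) / m ^ (c - 1)
  have hq : ∀ σ, 0 ≤ q σ := fun σ =>
    div_nonneg (prod_nonneg fun i _ => hM i (σ i)) (pow_nonneg hm.le _)
  have hqsum : ∑ σ, q σ = m := by
    simp only [q, ← sum_div, ← Fintype.prod_sum, hMsum, prod_const, card_univ]
    rw [div_eq_iff (pow_pos hm _).ne', ← pow_succ', Nat.sub_add_cancel hc]
  have hq0 : ∀ σ, q σ = 0 → P σ = 0 := fun σ h => by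
    obtain ⟨i, -, hi⟩ :=
      prod_eq_zero_iff.mp ((div_eq_zero_iff.mp h).resolve_right (pow_pos hm _).ne')
    exact le_antisymm (hi ▸ hPM σ i) (hP σ)
  have hterm : ∀ σ, -(P σ * log (q σ)) =
      ∑ i, P σ * -log (M i (σ i)) + P σ * ((c - 1 : ℝ) * log m) := fun σ => by
    rcases (hP σ).eq_or_lt with h | h
    · simp [← h]
    have hMpos : ∀ i, M i (σ i) ≠ 0 := fun i => (h.trans_le (hPM σ i)).ne'
    rw [log_div (prod_ne_zero_iff.mpr fun i _ => hMpos i) (pow_pos hm _).ne',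
      log_prod fun i _ => hMpos i, log_pow, Nat.cast_sub hc]
    simp only [mul_neg, ← mul_sum, sum_neg_distrib, Nat.cast_one]
    ring
  calc ∑ σ, negMulLog (P σ) ≤ ∑ σ, -(P σ * log (q σ)) :=
        sum_negMulLog_le_sum_neg_mul_log _ (fun σ _ => hP σ) (fun σ _ => hq σ) hqsum.le
          (fun σ _ => hq0 σ)
    _ = ∑ i, ∑ j, negMulLog (M i j) - (c - 1 : ℝ) * negMulLog m := by
      have hmarg : ∀ i, ∑ σ, P σ * -log (M i (σ i)) = ∑ j, negMulLog (M i j) := fun i => by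
        rw [sum_mul_apply_eq_sum_mul_sum_filter P (fun j => -log (M i j))]
        exact sum_congr rfl fun j _ => by simp only [negMulLog, M]; ring
      rw [sum_congr rfl fun σ _ => hterm σ, sum_add_distrib, sum_comm,
        sum_congr rfl fun i _ => hmarg i, ← sum_mul]
      simp only [negMulLog]
      ring

end FiniteEntropy

section Integrability

variable [MeasurableSpace X] {μ : Measure X}

lemma Real.negMulLog_mem_Icc {x : ℝ} (hx : x ∈ Icc (0 : ℝ) 1) : negMulLog x ∈ Icc (0 : ℝ) 1 :=
  ⟨negMulLog_nonneg hx.1 hx.2, (negMulLog_le_one_sub_self hx.1).trans (by linarith [hx.1])⟩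

lemma MeasureTheory.integrable_of_mem_Icc [IsFiniteMeasure μ] {f : X → ℝ} (hf : Measurable f)
    (h01 : ∀ x, f x ∈ Icc (0 : ℝ) 1) : Integrable f μ :=
  .of_bound hf.aestronglyMeasurable 1 <| ae_of_all _ fun x => by
    rw [Real.norm_eq_abs, abs_le]; constructor <;> linarith [(h01 x).1, (h01 x).2]

lemma MeasureTheory.integrable_negMulLog_of_mem_Icc [IsFiniteMeasure μ] {f : X → ℝ}
    (hf : Measurable f) (h01 : ∀ x, f x ∈ Icc (0 : ℝ) 1) :
    Integrable (fun x => negMulLog (f x)) μ :=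
  integrable_of_mem_Icc (continuous_negMulLog.measurable.comp hf) fun x => negMulLog_mem_Icc (h01 x)

lemma MeasureTheory.integral_negMulLog_le [IsProbabilityMeasure μ] {f : X → ℝ}
    (hf : Measurable f) (h01 : ∀ x, f x ∈ Icc (0 : ℝ) 1) :
    ∫ x, negMulLog (f x) ∂μ ≤ negMulLog (∫ x, f x ∂μ) :=
  concaveOn_negMulLog.le_map_integral continuous_negMulLog.continuousOn isClosed_Ici
    (ae_of_all _ fun x => (h01 x).1) (integrable_of_mem_Icc hf h01)
    (integrable_negMulLog_of_mem_Icc hf h01)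

end Integrability

namespace PartUnity

variable {T : X → X} {Φ : PartUnity X}

lemma mem_Icc (Φ : PartUnity X) (i : Fin Φ.n) (x : X) : Φ.f i x ∈ Icc (0 : ℝ) 1 :=
  ⟨Φ.nonneg i x, Φ.le_one i x⟩

def dynFun (Φ : PartUnity X) (T : X → X) {n : ℕ} (σ : Fin n → Fin Φ.n) (x : X) : ℝ :=
  ∏ i : Fin n, Φ.f (σ i) (T^[i] x)

lemma dynFun_mem_Icc {n : ℕ} (σ : Fin n → Fin Φ.n) (x : X) :
    Φ.dynFun T σ x ∈ Icc (0 : ℝ) 1 :=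
  ⟨prod_nonneg fun _ _ => Φ.nonneg _ _,
    prod_le_one (fun _ _ => Φ.nonneg _ _) fun _ _ => Φ.le_one _ _⟩

lemma sum_dynFun (n : ℕ) (x : X) : ∑ σ : Fin n → Fin Φ.n, Φ.dynFun T σ x = 1 := by
  simp only [dynFun]
  rw [← Fintype.prod_sum (fun (i : Fin n) j => Φ.f j (T^[i] x))]
  simp [Φ.sum_one]

lemma sum_filter_dynFun {n : ℕ} (i : Fin n) (j : Fin Φ.n) (x : X) :
    ∑ σ : Fin n → Fin Φ.n with σ i = j, Φ.dynFun T σ x = Φ.f j (T^[i] x) :=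
  sum_filter_prod_eq (p := fun (i : Fin n) j => Φ.f j (T^[i] x)) (fun _ => Φ.sum_one _) i j

lemma sum_negMulLog_dynFun (n : ℕ) (x : X) :
    ∑ σ : Fin n → Fin Φ.n, negMulLog (Φ.dynFun T σ x) =
      ∑ i : Fin n, ∑ j, negMulLog (Φ.f j (T^[i] x)) :=
  sum_negMulLog_prod (p := fun (i : Fin n) j => Φ.f j (T^[i] x)) fun _ => Φ.sum_one _

lemma exists_equiv_dyn (T : X → X) (Φ : PartUnity X) (n : ℕ) :
    ∃ e : Fin (dyn T Φ n).n ≃ (Fin n → Fin Φ.n), ∀ j, (dyn T Φ n).f j = Φ.dynFun T (e j) := by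
  induction n with
  | zero =>
    have : Unique (Fin (dyn T Φ 0).n) := inferInstanceAs (Unique (Fin 1))
    exact ⟨Equiv.ofUnique _ _, fun j => funext fun x => by simp [dyn, triv, dynFun]⟩
  | succ n ih =>
    obtain ⟨e, he⟩ := ih
    refine ⟨(finProdFinEquiv.symm.trans ((Equiv.refl _).prodCongr e)).trans
      (Fin.consEquiv fun _ => Fin Φ.n), fun j => funext fun x => ?_⟩
    change Φ.f (finProdFinEquiv.symm j).1 x * (dyn T Φ n).f (finProdFinEquiv.symm j).2 (T x) = _
    rw [he (finProdFinEquiv.symm j).2, dynFun, dynFun, Fin.prod_univ_succ]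
    simp only [Fin.val_zero, Fin.val_succ, Function.iterate_zero, Function.iterate_succ_apply]
    rfl

section Measurability

variable [MeasurableSpace X]

lemma Meas.dyn (hT : Measurable T) (hΦ : Φ.Meas) : ∀ n, (PartUnity.dyn T Φ n).Meas
  | 0 => fun _ => measurable_const
  | n + 1 => fun _ => (hΦ _).mul ((Meas.dyn hT hΦ n _).comp hT)

lemma Meas.comp (hΦ : Φ.Meas) {S : X → X} (hS : Measurable S) : (Φ.comp S).Meas :=
  fun i => (hΦ i).comp hS

lemma Meas.dynFun (hT : Measurable T) (hΦ : Φ.Meas) {n : ℕ} (σ : Fin n → Fin Φ.n) :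
    Measurable (Φ.dynFun T σ) :=
  Finset.measurable_prod _ fun i _ => (hΦ (σ i)).comp (hT.iterate i)

end Measurability

end PartUnity

section StaticEntropy

variable [MeasurableSpace X] {μ : Measure X}

lemma statEnt_eq_sum (μ : Measure X) (Φ : PartUnity X) :
    statEnt μ Φ = ∑ i, (negMulLog (∫ x, Φ.f i x ∂μ) - ∫ x, negMulLog (Φ.f i x) ∂μ) := by
  refine sum_congr rfl fun i _ => ?_
  simp only [negMulLog, neg_mul, integral_neg]
  ring

lemma statEnt_nonneg [IsProbabilityMeasure μ] {Φ : PartUnity X} (hΦ : Φ.Meas) :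
    0 ≤ statEnt μ Φ := by
  rw [statEnt_eq_sum]
  exact sum_nonneg fun i _ => sub_nonneg.mpr (integral_negMulLog_le (hΦ i) (Φ.mem_Icc i))

lemma statEnt_dyn (μ : Measure X) (T : X → X) (Φ : PartUnity X) (n : ℕ) :
    statEnt μ (PartUnity.dyn T Φ n) = ∑ σ : Fin n → Fin Φ.n,
      (negMulLog (∫ x, Φ.dynFun T σ x ∂μ) - ∫ x, negMulLog (Φ.dynFun T σ x) ∂μ) := by
  obtain ⟨e, he⟩ := PartUnity.exists_equiv_dyn T Φ n
  rw [statEnt_eq_sum, ← e.sum_comp]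
  simp only [he]

end StaticEntropy

namespace FinBorelPart

variable [MeasurableSpace X] {μ : Measure X} {T : X → X} (P : FinBorelPart X)

lemma measurableSet_dynSet (hT : Measurable T) {n : ℕ} (τ : Fin n → Fin P.n) :
    MeasurableSet (dynSet T P.A n τ) :=
  .iInter fun i => hT.iterate i (P.meas (τ i))

lemma pairwise_disjoint_dynSet (T : X → X) (n : ℕ) :
    Pairwise (Function.onFun Disjoint (dynSet T P.A n)) := by
  intro τ τ' hne
  obtain ⟨i, hi⟩ := Function.ne_iff.mp hne
  exact ((P.disj _ _ hi).preimage _).mono (iInter_subset _ i) (iInter_subset _ i)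

lemma iUnion_dynSet (T : X → X) (n : ℕ) : ⋃ τ, dynSet T P.A n τ = univ := by
  refine eq_univ_of_forall fun x => ?_
  have hx : ∀ i : Fin n, ∃ m, T^[i] x ∈ P.A m := fun i =>
    mem_iUnion.mp (P.cover ▸ mem_univ (T^[i] x))
  choose τ hτ using hx
  exact mem_iUnion.mpr ⟨τ, mem_iInter.mpr hτ⟩

lemma integral_eq_sum_setIntegral_dynSet (hT : Measurable T) {f : X → ℝ}
    (hf : Integrable f μ) (n : ℕ) :
    ∫ x, f x ∂μ = ∑ τ, ∫ x in dynSet T P.A n τ, f x ∂μ := by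
  rw [← setIntegral_univ, ← P.iUnion_dynSet T n, integral_iUnion_fintype
    (P.measurableSet_dynSet hT) (P.pairwise_disjoint_dynSet T n) fun _ => hf.integrableOn]

lemma sum_measureReal_dynSet [IsProbabilityMeasure μ] (hT : Measurable T) (n : ℕ) :
    ∑ τ, μ.real (dynSet T P.A n τ) = 1 := by
  simpa using (P.integral_eq_sum_setIntegral_dynSet (μ := μ) hT (integrable_const (1 : ℝ)) n).symm

end FinBorelPart

def Real.NegMulLogModulus (ω κ : ℝ) : Prop :=
  ∀ a ∈ Icc (0 : ℝ) 1, ∀ b ∈ Icc (0 : ℝ) 1, |a - b| ≤ ω → negMulLog a ≤ negMulLog b + κ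

lemma Real.exists_pos_negMulLogModulus {κ : ℝ} (hκ : 0 < κ) :
    ∃ ω > 0, NegMulLogModulus ω κ := by
  obtain ⟨δ, hδ, h⟩ := Metric.uniformContinuousOn_iff.mp
    (isCompact_Icc.uniformContinuousOn_of_continuous continuous_negMulLog.continuousOn) κ hκ
  refine ⟨δ / 2, half_pos hδ, fun a ha b hb hab => ?_⟩
  have := h a ha b hb (by rw [dist_eq]; linarith)
  rw [dist_eq] at this
  linarith [(abs_lt.mp this).2]

section CellEstimate

variable [MeasurableSpace X] {μ : Measure X} [IsFiniteMeasure μ] {C : Set X} {ω κ : ℝ}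

/-- The average of `g` over `C` is `ω`-close to every value of `g` on `C`. -/
lemma mul_negMulLog_setAverage_le {g : X → ℝ} (hg : Measurable g)
    (hg01 : ∀ x, g x ∈ Icc (0 : ℝ) 1) (hC : MeasurableSet C) (hμC : 0 < μ.real C)
    (hη : NegMulLogModulus ω κ)
    (hosc : ∀ x ∈ C, ∀ y ∈ C, |g x - g y| ≤ ω) :
    μ.real C * negMulLog ((∫ x in C, g x ∂μ) / μ.real C) ≤
      ∫ x in C, negMulLog (g x) ∂μ + κ * μ.real C := by
  set a := (∫ x in C, g x ∂μ) / μ.real C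
  have hgC : IntegrableOn g C μ := (integrable_of_mem_Icc hg hg01).integrableOn
  have hbound : ∀ b : ℝ, (∀ y ∈ C, g y ≤ b) → ∫ y in C, g y ∂μ ≤ b * μ.real C := fun b hb => by
    simpa [mul_comm] using setIntegral_mono_on hgC (integrableOn_const (C := b)) hC hb
  have ha01 : a ∈ Icc (0 : ℝ) 1 := by
    refine ⟨div_nonneg (setIntegral_nonneg hC fun x _ => (hg01 x).1) hμC.le, ?_⟩
    obtain ⟨x, hx⟩ : C.Nonempty := nonempty_iff_ne_empty.mpr fun h => by
      rw [h, measureReal_empty] at hμC; exact hμC.false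
    exact (div_le_one hμC).mpr (by simpa using hbound 1 fun y _ => (hg01 y).2)
  have hclose : ∀ x ∈ C, |a - g x| ≤ ω := by
    intro x hx
    have hup : a ≤ g x + ω := (div_le_iff₀ hμC).mpr <| hbound _ fun y hy => by
      linarith [(abs_le.mp (hosc y hy x hx)).2]
    have hlow : g x - ω ≤ a := (le_div_iff₀ hμC).mpr <| setIntegral_ge_of_const_le_real hC
      (measure_ne_top μ C) (fun y hy => by linarith [(abs_le.mp (hosc x hx y hy)).2]) hgC
    exact abs_le.mpr ⟨by linarith, by linarith⟩
  have := setIntegral_ge_of_const_le_real hC (measure_ne_top μ C)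
    (fun x hx => show negMulLog a - κ ≤ negMulLog (g x) by
      linarith [hη a ha01 (g x) (hg01 x) (hclose x hx)])
    (integrable_negMulLog_of_mem_Icc hg hg01).integrableOn
  linarith

lemma PartUnity.sum_negMulLog_setIntegral_le (Ψ : PartUnity X) (hΨ : Ψ.Meas)
    (hC : MeasurableSet C)
    (hη : NegMulLogModulus ω κ)
    (hosc : ∀ j, ∀ x ∈ C, ∀ y ∈ C, |Ψ.f j x - Ψ.f j y| ≤ ω) :
    ∑ j, negMulLog (∫ x in C, Ψ.f j x ∂μ) ≤
      ∑ j, ∫ x in C, negMulLog (Ψ.f j x) ∂μ + negMulLog (μ.real C) + Ψ.n * κ * μ.real C := by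
  rcases measureReal_nonneg.eq_or_lt with hμC | hμC
  · have : μ.restrict C = 0 := Measure.restrict_eq_zero.mpr
      ((measureReal_eq_zero_iff (measure_ne_top μ C)).mp hμC.symm)
    simp [this, ← hμC]
  set a : Fin Ψ.n → ℝ := fun j => (∫ x in C, Ψ.f j x ∂μ) / μ.real C
  have hsum : ∑ j, a j = 1 := by
    rw [← sum_div, ← integral_finsetSum _ fun j _ =>
      (integrable_of_mem_Icc (hΨ j) (Ψ.mem_Icc j)).integrableOn]
    simp [Ψ.sum_one, hμC.ne']
  -- `η(μ(C) a) = a η(μ(C)) + μ(C) η(a)` splits off the entropy of the cell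
  calc ∑ j, negMulLog (∫ x in C, Ψ.f j x ∂μ)
      = ∑ j, (a j * negMulLog (μ.real C) + μ.real C * negMulLog (a j)) := by
        refine sum_congr rfl fun j _ => ?_
        rw [← negMulLog_mul, mul_div_cancel₀ _ hμC.ne']
    _ ≤ ∑ j, (a j * negMulLog (μ.real C) + (∫ x in C, negMulLog (Ψ.f j x) ∂μ + κ * μ.real C)) :=
        sum_le_sum fun j _ => add_le_add le_rfl (mul_negMulLog_setAverage_le (hΨ j) (Ψ.mem_Icc j)
          hC hμC hη (hosc j))
    _ = _ := by
        rw [sum_add_distrib, sum_add_distrib, ← sum_mul, hsum, sum_const, card_univ,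
          Fintype.card_fin, nsmul_eq_mul]
        ring

end CellEstimate

section CoreEstimate

variable [MeasurableSpace X] {μ : Measure X} {T : X → X} {Φ : PartUnity X} {ω κ : ℝ}

lemma PartUnity.sum_negMulLog_setIntegral_dynFun_le [IsFiniteMeasure μ] (hT : Measurable T)
    (hΦ : Φ.Meas) {n : ℕ} (hn : 0 < n) {C : Set X} (hC : MeasurableSet C)
    (hη : NegMulLogModulus ω κ)
    (hosc : ∀ (i : Fin n) j, ∀ x ∈ C, ∀ y ∈ C, |Φ.f j (T^[i] x) - Φ.f j (T^[i] y)| ≤ ω) :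
    ∑ σ : Fin n → Fin Φ.n, negMulLog (∫ x in C, Φ.dynFun T σ x ∂μ) ≤
      ∑ i : Fin n, ∑ j, ∫ x in C, negMulLog (Φ.f j (T^[i] x)) ∂μ + negMulLog (μ.real C)
        + n * Φ.n * κ * μ.real C := by
  have : Nonempty (Fin n) := ⟨⟨0, hn⟩⟩
  have hint : ∀ σ : Fin n → Fin Φ.n, IntegrableOn (Φ.dynFun T σ) C μ := fun σ =>
    (integrable_of_mem_Icc (hΦ.dynFun hT σ) (PartUnity.dynFun_mem_Icc σ)).integrableOn
  have hmarg : ∀ i j, ∑ σ with σ i = j, ∫ x in C, Φ.dynFun T σ x ∂μ =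
      ∫ x in C, Φ.f j (T^[i] x) ∂μ := fun i j => by
    rw [← integral_finsetSum _ fun σ _ => hint σ]
    simp_rw [PartUnity.sum_filter_dynFun]
  have hmass : ∑ σ : Fin n → Fin Φ.n, ∫ x in C, Φ.dynFun T σ x ∂μ = μ.real C := by
    rw [← integral_finsetSum _ fun σ _ => hint σ]
    simp [PartUnity.sum_dynFun]
  have hcell : ∀ i : Fin n, ∑ j, negMulLog (∫ x in C, Φ.f j (T^[i] x) ∂μ) ≤
      ∑ j, ∫ x in C, negMulLog (Φ.f j (T^[i] x)) ∂μ + negMulLog (μ.real C)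
        + Φ.n * κ * μ.real C := fun i =>
    (Φ.comp T^[i]).sum_negMulLog_setIntegral_le (hΦ.comp (hT.iterate i)) hC hη (hosc i)
  calc _ ≤ ∑ i : Fin n, ∑ j, negMulLog (∫ x in C, Φ.f j (T^[i] x) ∂μ)
        - (n - 1 : ℝ) * negMulLog (μ.real C) := by
        simpa [hmarg, hmass] using sum_negMulLog_le_sum_marginal
          (P := fun σ : Fin n → Fin Φ.n => ∫ x in C, Φ.dynFun T σ x ∂μ)
          fun σ => setIntegral_nonneg hC fun x _ => (PartUnity.dynFun_mem_Icc σ x).1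
    _ ≤ ∑ i : Fin n, (∑ j, ∫ x in C, negMulLog (Φ.f j (T^[i] x)) ∂μ + negMulLog (μ.real C)
        + Φ.n * κ * μ.real C) - (n - 1 : ℝ) * negMulLog (μ.real C) := by
        gcongr with i; exact hcell i
    _ = _ := by
        simp only [sum_add_distrib, sum_const, card_univ, Fintype.card_fin, nsmul_eq_mul]
        ring

lemma statEnt_dyn_le [IsProbabilityMeasure μ] (hT : Measurable T) (hΦ : Φ.Meas)
    (P : FinBorelPart X)
    (hη : NegMulLogModulus ω κ)
    (hosc : ∀ m j, ∀ x ∈ P.A m, ∀ y ∈ P.A m, |Φ.f j x - Φ.f j y| ≤ ω) {n : ℕ} (hn : 0 < n) :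
    statEnt μ (PartUnity.dyn T Φ n) ≤
      ∑ τ, negMulLog (μ.real (dynSet T P.A n τ)) + n * Φ.n * κ := by
  set C := dynSet T P.A n
  have hψ : ∀ σ : Fin n → Fin Φ.n, Integrable (Φ.dynFun T σ) μ := fun σ =>
    integrable_of_mem_Icc (hΦ.dynFun hT σ) (PartUnity.dynFun_mem_Icc σ)
  have hηφ : ∀ (i : Fin n) j, Integrable (fun x => negMulLog (Φ.f j (T^[i] x))) μ := fun i j =>
    integrable_negMulLog_of_mem_Icc ((hΦ j).comp (hT.iterate i)) fun _ => Φ.mem_Icc j _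
  have hlin : ∑ σ : Fin n → Fin Φ.n, ∫ x, negMulLog (Φ.dynFun T σ x) ∂μ =
      ∑ τ, ∑ i : Fin n, ∑ j, ∫ x in C τ, negMulLog (Φ.f j (T^[i] x)) ∂μ := by
    rw [← integral_finsetSum _ fun σ _ =>
      integrable_negMulLog_of_mem_Icc (hΦ.dynFun hT σ) (PartUnity.dynFun_mem_Icc σ)]
    simp_rw [PartUnity.sum_negMulLog_dynFun]
    rw [integral_finsetSum _ fun i _ => integrable_finsetSum _ fun j _ => hηφ i j]
    simp_rw [integral_finsetSum _ fun j _ => hηφ _ j,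
      P.integral_eq_sum_setIntegral_dynSet hT (hηφ _ _) n]
    exact (sum_congr rfl fun i _ => sum_comm).trans sum_comm
  have hconc : ∑ σ : Fin n → Fin Φ.n, negMulLog (∫ x, Φ.dynFun T σ x ∂μ) ≤
      ∑ τ, ∑ σ : Fin n → Fin Φ.n, negMulLog (∫ x in C τ, Φ.dynFun T σ x ∂μ) := by
    rw [sum_comm]
    refine sum_le_sum fun σ _ => ?_
    rw [P.integral_eq_sum_setIntegral_dynSet hT (hψ σ) n]
    exact negMulLog_sum_le _ fun τ _ => setIntegral_nonneg (P.measurableSet_dynSet hT τ)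
      fun x _ => (PartUnity.dynFun_mem_Icc σ x).1
  have hcyl : ∀ τ, ∑ σ : Fin n → Fin Φ.n, negMulLog (∫ x in C τ, Φ.dynFun T σ x ∂μ) ≤
      ∑ i : Fin n, ∑ j, ∫ x in C τ, negMulLog (Φ.f j (T^[i] x)) ∂μ + negMulLog (μ.real (C τ))
        + n * Φ.n * κ * μ.real (C τ) := fun τ =>
    Φ.sum_negMulLog_setIntegral_dynFun_le hT hΦ hn (P.measurableSet_dynSet hT τ) hη
      fun i j x hx y hy => hosc (τ i) j _ (mem_iInter.mp hx i) _ (mem_iInter.mp hy i)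
  rw [statEnt_dyn, sum_sub_distrib, hlin]
  calc _ ≤ ∑ τ, (∑ i : Fin n, ∑ j, ∫ x in C τ, negMulLog (Φ.f j (T^[i] x)) ∂μ
        + negMulLog (μ.real (C τ)) + n * Φ.n * κ * μ.real (C τ))
        - ∑ τ, ∑ i : Fin n, ∑ j, ∫ x in C τ, negMulLog (Φ.f j (T^[i] x)) ∂μ :=
        sub_le_sub_right (hconc.trans (sum_le_sum fun τ _ => hcyl τ)) _
    _ = _ := by
        rw [sum_add_distrib, sum_add_distrib, ← mul_sum, P.sum_measureReal_dynSet hT]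
        ring

end CoreEstimate

/-- The atoms are the level sets of `x ↦ (⌊N φ(x)⌋)_{φ ∈ Φ}` for some `N > 1 / ω`. -/
lemma PartUnity.exists_finBorelPart_abs_sub_lt [MeasurableSpace X] {Φ : PartUnity X}
    (hΦ : Φ.Meas) {ω : ℝ} (hω : 0 < ω) :
    ∃ P : FinBorelPart X, ∀ m j, ∀ x ∈ P.A m, ∀ y ∈ P.A m, |Φ.f j x - Φ.f j y| < ω := by
  obtain ⟨N, hN⟩ := exists_nat_gt (1 / ω)
  have hNpos : (0 : ℝ) < N := (one_div_pos.mpr hω).trans hN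
  set level : Fin Φ.n → X → ℕ := fun j x => ⌊N * Φ.f j x⌋₊
  have hlevel : ∀ j x, level j x < N + 1 := fun j x => Nat.lt_succ_of_le <|
    Nat.floor_le_of_le (mul_le_of_le_one_right hNpos.le (Φ.le_one j x))
  let e := Fintype.equivFin (Fin Φ.n → Fin (N + 1))
  refine ⟨⟨_, fun m => {x | ∀ j, level j x = e.symm m j}, fun m => ?_, fun m m' hne => ?_,
    eq_univ_of_forall fun x => ?_⟩, fun m j x hx y hy => ?_⟩
  · simp only [ofPred_forall]
    exact .iInter fun j =>
      (Nat.measurable_floor.comp ((hΦ j).const_mul _)) (measurableSet_singleton _)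
  · refine Set.disjoint_left.mpr fun x hx hx' => hne (e.symm.injective ?_)
    exact funext fun j => Fin.ext ((hx j).symm.trans (hx' j))
  · exact mem_iUnion.mpr ⟨e fun j => ⟨level j x, hlevel j x⟩, fun j => by simp⟩
  · have hfloor : ⌊N * Φ.f j x⌋ = ⌊N * Φ.f j y⌋ := by
      rw [← Int.natCast_floor_eq_floor (by positivity [Φ.nonneg j x]),
        ← Int.natCast_floor_eq_floor (by positivity [Φ.nonneg j y])]
      exact congrArg Nat.cast ((hx j).trans (hy j).symm)
    have := Int.abs_sub_lt_one_of_floor_eq_floor hfloor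
    rw [← mul_sub, abs_mul, abs_of_pos hNpos, ← lt_div_iff₀' hNpos] at this
    exact this.trans (by rwa [div_lt_iff₀ hNpos, mul_comm, ← div_lt_iff₀ hω])

section LimitEstimate

variable [MeasurableSpace X] {μ : Measure X} [IsProbabilityMeasure μ] {T : X → X}
  {Φ : PartUnity X}

lemma locEnt_le_ksLocEnt_add (hT : Measurable T) (hΦ : Φ.Meas) (P : FinBorelPart X) {ω κ : ℝ}
    (hη : NegMulLogModulus ω κ)
    (hosc : ∀ m j, ∀ x ∈ P.A m, ∀ y ∈ P.A m, |Φ.f j x - Φ.f j y| ≤ ω) :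
    locEnt T μ Φ ≤ ksLocEnt T μ P + Φ.n * κ := by
  set H : ℕ → ℝ := fun n => ∑ τ : Fin n → Fin P.n, negMulLog (μ.real (dynSet T P.A n τ))
  have hH : ∀ n : ℕ, H n / n ≤ log P.n := fun n => by
    rcases n.eq_zero_or_pos with rfl | hn
    · simp [log_natCast_nonneg]
    rw [div_le_iff₀ (by positivity)]
    calc H n ≤ log (Fintype.card (Fin n → Fin P.n)) :=
          sum_negMulLog_le_log_card (fun _ => measureReal_nonneg) (P.sum_measureReal_dynSet hT n)
      _ = log P.n * n := by simp [log_pow, mul_comm]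
  have hbdd : IsBoundedUnder (· ≤ ·) atTop fun n : ℕ => H n / n := isBoundedUnder_of ⟨_, hH⟩
  have hcobdd : IsCoboundedUnder (· ≤ ·) atTop fun n : ℕ => H n / n :=
    isCoboundedUnder_le_of_le atTop fun n => div_nonneg
      (sum_nonneg fun τ _ => negMulLog_nonneg measureReal_nonneg measureReal_le_one) n.cast_nonneg
  calc locEnt T μ Φ ≤ limsup (fun n : ℕ => H n / n + Φ.n * κ) atTop := by
        refine limsup_le_limsup ?_ (isCoboundedUnder_le_of_le atTop fun n =>
          div_nonneg (statEnt_nonneg (hΦ.dyn hT n)) n.cast_nonneg)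
          (isBoundedUnder_of ⟨log P.n + Φ.n * κ, fun n => by linarith [hH n]⟩)
        filter_upwards [eventually_gt_atTop 0] with n hn
        have hn' : (0 : ℝ) < n := Nat.cast_pos.mpr hn
        rw [div_add' _ _ _ hn'.ne', div_le_div_iff_of_pos_right hn']
        linarith [statEnt_dyn_le hT hΦ P hη hosc (μ := μ) hn]
    _ = ksLocEnt T μ P + Φ.n * κ := limsup_add_const _ _ _ hbdd hcobdd

lemma locEnt_le_ksEnt (hT : Measurable T) (hΦ : Φ.Meas) :
    ((locEnt T μ Φ : ℝ) : EReal) ≤ ksEnt T μ := by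
  refine EReal.ge_of_forall_gt_iff_ge.mp fun z hzE => ?_
  have hz : z < locEnt T μ Φ := EReal.coe_lt_coe_iff.mp hzE
  have hn : (0 : ℝ) < Φ.n + 1 := Nat.cast_add_one_pos _
  set κ := (locEnt T μ Φ - z) / (Φ.n + 1)
  have hκ : 0 < κ := div_pos (by linarith) hn
  have hκn : Φ.n * κ < locEnt T μ Φ - z :=
    calc Φ.n * κ < (Φ.n + 1) * κ := by gcongr; exact lt_add_one _
      _ = locEnt T μ Φ - z := mul_div_cancel₀ _ hn.ne'
  obtain ⟨ω, hω, hη⟩ := exists_pos_negMulLogModulus hκ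
  obtain ⟨P, hP⟩ := PartUnity.exists_finBorelPart_abs_sub_lt hΦ hω
  have hzP : z ≤ ksLocEnt T μ P := by
    have := locEnt_le_ksLocEnt_add hT hΦ P (μ := μ) hη fun m j x hx y hy => (hP m j x hx y hy).le
    linarith
  exact (EReal.coe_le_coe_iff.mpr hzP).trans
    (le_iSup (fun P : FinBorelPart X => ((ksLocEnt T μ P : ℝ) : EReal)) P)

end LimitEstimate

theorem metEnt_le_ksEnt_general {X : Type*} [MetricSpace X]
    [MeasurableSpace X] [BorelSpace X]
    (T : X → X) (hT : Continuous T)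
    (μ : Measure X) [IsProbabilityMeasure μ] :
    (∀ Φ : PartUnity X, Φ.Cont → ((locEnt T μ Φ : ℝ) : EReal) ≤ ksEnt T μ) ∧
    metEnt T μ ≤ ksEnt T μ := by
  have key : ∀ Φ : PartUnity X, Φ.Cont → ((locEnt T μ Φ : ℝ) : EReal) ≤ ksEnt T μ :=
    fun Φ hΦ => locEnt_le_ksEnt hT.measurable fun i => (hΦ i).measurable
  exact ⟨key, iSup_le fun Φ => key Φ.1 Φ.2⟩

/-- `h̃_μ(T) ≤ h_μ(T)`: for every continuous partition of unity `Φ`,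
`h̃_μ(T,Φ) ≤ h_μ(T)`, hence the supremum `h̃_μ(T)` is at most the Kolmogorov–Sinai
entropy. -/
theorem metEnt_le_ksEnt {X : Type*} [MetricSpace X] [CompactSpace X] [Nonempty X]
    [MeasurableSpace X] [BorelSpace X]
    (T : X → X) (hT : Continuous T) (hTsurj : Function.Surjective T)
    (μ : Measure X) [IsProbabilityMeasure μ] (hμ : MeasurePreserving T μ μ) :
    (∀ Φ : PartUnity X, Φ.Cont → ((locEnt T μ Φ : ℝ) : EReal) ≤ ksEnt T μ) ∧
    metEnt T μ ≤ ksEnt T μ :=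
  metEnt_le_ksEnt_general T hT μ
end

section
/- For any continuous surjective self-map T of a compact metric space X, h̃_top(T) ≤ h_top(T): for every continuous partition of unity Φ on X, h̃(T,Φ) is at most the classical topological entropy of T defined via open covers. -/
open MeasureTheory Filter Set

/-! ### Metric entropy via partitions of unity -/

variable {X Y : Type*}

/-!
Given a continuous partition of unity `Φ` and `c > 1`, compactness yields a finite open cover `𝒰`
on each member of which `Σ_φ sup φ ≤ c`. A supremum of a product is at most the product of the
suprema, so every member `V` of `𝒰₀ⁿ⁻¹` has `Σ_{φ ∈ Φ₀ⁿ⁻¹} sup_V φ ≤ cⁿ`; summing over a minimal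
subcover gives `H̃(Φ₀ⁿ⁻¹) ≤ N(𝒰₀ⁿ⁻¹) cⁿ`. Hence `h̃(T,Φ) ≤ h(T,𝒰) + log c`, and we let `c → 1`.
-/

namespace PartUnity

variable {X Y : Type*}

noncomputable def supSum (Φ : PartUnity X) (S : Set X) : ℝ := ∑ i, ⨆ x ∈ S, Φ.f i x

section supSum

variable (Φ : PartUnity X) {S S' : Set X}

lemma biSup_nonneg (i : Fin Φ.n) : 0 ≤ ⨆ x ∈ S, Φ.f i x :=
  Real.iSup_nonneg fun x => Real.iSup_nonneg fun _ => Φ.nonneg i x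

lemma biSup_le {i : Fin Φ.n} {a : ℝ} (h : ∀ x ∈ S, Φ.f i x ≤ a) (ha : 0 ≤ a) :
    ⨆ x ∈ S, Φ.f i x ≤ a :=
  Real.iSup_le (fun x => Real.iSup_le (h x) ha) ha

lemma le_biSup (i : Fin Φ.n) {x : X} (hx : x ∈ S) : Φ.f i x ≤ ⨆ y ∈ S, Φ.f i y := by
  have hbdd : BddAbove (Set.range fun y => ⨆ _ : y ∈ S, Φ.f i y) :=
    ⟨1, by rintro _ ⟨y, rfl⟩; exact Real.iSup_le (fun _ => Φ.le_one i y) zero_le_one⟩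
  exact (le_ciSup_of_le (Set.finite_range _).bddAbove hx le_rfl).trans (le_ciSup hbdd x)

lemma supSum_nonneg : 0 ≤ Φ.supSum S :=
  Finset.sum_nonneg fun i _ => Φ.biSup_nonneg i

lemma one_le_supSum {x : X} (hx : x ∈ S) : 1 ≤ Φ.supSum S :=
  (Φ.sum_one x).symm.le.trans (Finset.sum_le_sum fun i _ => Φ.le_biSup i hx)

lemma supSum_mono (h : S ⊆ S') : Φ.supSum S ≤ Φ.supSum S' :=
  Finset.sum_le_sum fun i _ =>
    Φ.biSup_le (fun _ hx => Φ.le_biSup i (h hx)) (Φ.biSup_nonneg i)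

lemma supSum_le_sum_of_subset_biUnion {ι : Type*} (t : Finset ι) (V : ι → Set X)
    (h : S ⊆ ⋃ k ∈ t, V k) : Φ.supSum S ≤ ∑ k ∈ t, Φ.supSum (V k) := by
  simp only [supSum]
  rw [Finset.sum_comm]
  refine Finset.sum_le_sum fun i _ => Φ.biSup_le (fun x hx => ?_)
    (Finset.sum_nonneg fun k _ => Φ.biSup_nonneg i)
  obtain ⟨k, hk, hxk⟩ := Set.mem_iUnion₂.mp (h hx)
  exact (Φ.le_biSup i hxk).trans
    (Finset.single_le_sum (f := fun k => ⨆ y ∈ V k, Φ.f i y)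
      (fun k _ => Φ.biSup_nonneg i) hk)

lemma supSum_join_le (Ψ : PartUnity X) : (Φ.join Ψ).supSum S ≤ Φ.supSum S * Ψ.supSum S := by
  change ∑ k : Fin (Φ.n * Ψ.n), ⨆ x ∈ S, (Φ.join Ψ).f k x ≤ _
  rw [← Equiv.sum_comp finProdFinEquiv, supSum, supSum, Finset.sum_mul_sum,
    ← Fintype.sum_prod_type']
  refine Finset.sum_le_sum fun p _ => (Φ.join Ψ).biSup_le (fun x hx => ?_)
    (mul_nonneg (Φ.biSup_nonneg _) (Ψ.biSup_nonneg _))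
  simp only [join, Equiv.symm_apply_apply]
  exact mul_le_mul (Φ.le_biSup _ hx) (Ψ.le_biSup _ hx) (Ψ.nonneg _ x) (Φ.biSup_nonneg _)

lemma supSum_comp_le (Ψ : PartUnity Y) (T : X → Y) {B : Set Y} (h : Set.MapsTo T S B) :
    (Ψ.comp T).supSum S ≤ Ψ.supSum B :=
  Finset.sum_le_sum fun i _ =>
    (Ψ.comp T).biSup_le (fun _ hx => Ψ.le_biSup i (h hx)) (Ψ.biSup_nonneg i)

lemma topStat_eq_supSum_univ : topStat Φ = Φ.supSum Set.univ := by
  simp only [topStat, supSum, Set.mem_univ, ciSup_unique]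

end supSum

end PartUnity

section coverNum

variable {X α : Type*} [Fintype α] (V : α → Set X) {S : Set X}

lemma coverNum_le_card {t : Finset α} (h : S ⊆ ⋃ i ∈ t, V i) : coverNum V S ≤ t.card :=
  Nat.sInf_le ⟨t, rfl, h⟩

lemma exists_card_eq_coverNum (h : S ⊆ ⋃ i, V i) :
    ∃ t : Finset α, t.card = coverNum V S ∧ S ⊆ ⋃ i ∈ t, V i :=
  Nat.sInf_mem (s := {k | ∃ t : Finset α, t.card = k ∧ S ⊆ ⋃ i ∈ t, V i})
    ⟨_, Finset.univ, rfl, by simpa using h⟩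

end coverNum

section dynamics

variable {X : Type*} (T : X → X) {m : ℕ} (U : Fin m → Set X) (Φ : PartUnity X) {c : ℝ}

lemma dynSet_succ (n : ℕ) (σ : Fin (n + 1) → Fin m) :
    dynSet T U (n + 1) σ = U (σ 0) ∩ T ⁻¹' dynSet T U n (Fin.tail σ) := by
  ext x
  simp [dynSet, Fin.forall_fin_succ, Fin.tail, Function.iterate_succ_apply]

lemma iUnion_dynSet (hU : ⋃ j, U j = Set.univ) (n : ℕ) :
    ⋃ σ, dynSet T U n σ = Set.univ := by
  refine Set.eq_univ_of_forall fun x => ?_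
  have hx : ∀ i : Fin n, ∃ j, T^[i] x ∈ U j := fun i =>
    Set.mem_iUnion.mp (hU ▸ Set.mem_univ (T^[i] x))
  choose σ hσ using hx
  exact Set.mem_iUnion.mpr ⟨σ, Set.mem_iInter.mpr hσ⟩

lemma supSum_dyn_dynSet_le (hU : ∀ j, Φ.supSum (U j) ≤ c) :
    ∀ (n : ℕ) (σ : Fin n → Fin m), (PartUnity.dyn T Φ n).supSum (dynSet T U n σ) ≤ c ^ n
  | 0, σ => by
    change ∑ _ : Fin 1, ⨆ x ∈ dynSet T U 0 σ, (1 : ℝ) ≤ 1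
    simpa using Real.iSup_le (fun _ => Real.iSup_le (fun _ => le_rfl) zero_le_one) zero_le_one
  | n + 1, σ => by
    rw [PartUnity.dyn, dynSet_succ, pow_succ']
    calc _ ≤ Φ.supSum (U (σ 0) ∩ _) * ((PartUnity.dyn T Φ n).comp T).supSum (U (σ 0) ∩ _) :=
          Φ.supSum_join_le _
      _ ≤ c * c ^ n :=
          mul_le_mul ((Φ.supSum_mono Set.inter_subset_left).trans (hU (σ 0)))
            ((PartUnity.supSum_comp_le _ T fun _ hx => hx.2).trans
              (supSum_dyn_dynSet_le hU n _))
            (PartUnity.supSum_nonneg _) ((hU (σ 0)).trans' Φ.supSum_nonneg)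

lemma topStat_dyn_le_coverNum_mul (hcov : ⋃ j, U j = Set.univ)
    (hU : ∀ j, Φ.supSum (U j) ≤ c) (n : ℕ) :
    topStat (PartUnity.dyn T Φ n)
      ≤ coverNum (fun σ : Fin n → Fin m => dynSet T U n σ) Set.univ * c ^ n := by
  obtain ⟨t, ht, hcover⟩ :=
    exists_card_eq_coverNum (fun σ : Fin n → Fin m => dynSet T U n σ) (iUnion_dynSet T U hcov n).ge
  calc topStat (PartUnity.dyn T Φ n) = (PartUnity.dyn T Φ n).supSum Set.univ :=
        PartUnity.topStat_eq_supSum_univ _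
    _ ≤ ∑ σ ∈ t, (PartUnity.dyn T Φ n).supSum (dynSet T U n σ) :=
        PartUnity.supSum_le_sum_of_subset_biUnion _ t _ hcover
    _ ≤ ∑ _σ ∈ t, c ^ n := Finset.sum_le_sum fun σ _ => supSum_dyn_dynSet_le T U Φ hU n σ
    _ = _ := by rw [Finset.sum_const, nsmul_eq_mul, ht]

end dynamics

lemma limsup_le_limsup_add_of_eventually_le {ι : Type*} {F : Filter ι} [F.NeBot]
    {u v : ι → ℝ} {c : ℝ} (hu : F.IsBoundedUnder (· ≥ ·) u) (hv : F.IsBoundedUnder (· ≤ ·) v)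
    (hv' : F.IsBoundedUnder (· ≥ ·) v) (h : ∀ᶠ i in F, u i ≤ v i + c) :
    F.limsup u ≤ F.limsup v + c := by
  rw [← limsup_add_const F v c hv hv'.isCoboundedUnder_le]
  exact limsup_le_limsup h hu.isCoboundedUnder_le
    (isBoundedUnder_le_add hv (isBoundedUnder_const (a := c)))

lemma topLocEnt_le_covLocEnt_add_log {X : Type*} [TopologicalSpace X] [Nonempty X] (T : X → X)
    (Φ : PartUnity X) (C : FinOpenCover X) {c : ℝ} (hU : ∀ j, Φ.supSum (C.U j) ≤ c) :
    topLocEnt T Φ ≤ covLocEnt T C + Real.log c := by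
  set K : ℕ → ℝ := fun n => coverNum (fun σ : Fin n → Fin C.n => dynSet T C.U n σ) Set.univ
  obtain x := Classical.arbitrary X
  have hc : 1 ≤ c := by
    obtain ⟨j, hj⟩ := Set.mem_iUnion.mp (C.cov ▸ Set.mem_univ x)
    exact (Φ.one_le_supSum hj).trans (hU j)
  have hstat n : 1 ≤ topStat (PartUnity.dyn T Φ n) :=
    (PartUnity.topStat_eq_supSum_univ _).symm ▸ PartUnity.one_le_supSum _ (Set.mem_univ x)
  have hK n : 1 ≤ K n ∧ K n ≤ (C.n : ℝ) ^ n := by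
    obtain ⟨t, ht, hcover⟩ :=
      exists_card_eq_coverNum (fun σ : Fin n → Fin C.n => dynSet T C.U n σ)
        (iUnion_dynSet T C.U C.cov n).ge
    obtain ⟨σ, hσ, -⟩ := Set.mem_iUnion₂.mp (hcover (Set.mem_univ x))
    have hle := coverNum_le_card (fun σ : Fin n → Fin C.n => dynSet T C.U n σ)
      (S := Set.univ) (t := Finset.univ) (by simp [iUnion_dynSet T C.U C.cov n])
    simp only [Finset.card_univ, Fintype.card_fun, Fintype.card_fin] at hle
    exact ⟨Nat.one_le_cast.mpr (ht ▸ Finset.card_pos.mpr ⟨σ, hσ⟩),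
      (Nat.cast_le.mpr hle).trans_eq (Nat.cast_pow _ _)⟩
  have hlogK n : Real.log (K n) ≤ Real.log C.n * n := by
    rw [mul_comm, ← Real.log_pow]
    exact Real.log_le_log (by linarith [hK n]) (hK n).2
  apply limsup_le_limsup_add_of_eventually_le
  · exact isBoundedUnder_of ⟨0, fun n => div_nonneg (Real.log_nonneg (hstat n)) n.cast_nonneg⟩
  · exact isBoundedUnder_of ⟨Real.log C.n, fun n =>
      div_le_of_le_mul₀ n.cast_nonneg (Real.log_natCast_nonneg _) (hlogK n)⟩
  · exact isBoundedUnder_of ⟨0, fun n => div_nonneg (Real.log_nonneg (hK n).1) n.cast_nonneg⟩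
  · filter_upwards [eventually_ne_atTop 0] with n hn
    have hn : (n : ℝ) ≠ 0 := Nat.cast_ne_zero.mpr hn
    have hlog : Real.log (topStat (PartUnity.dyn T Φ n)) ≤ Real.log (K n) + n * Real.log c := by
      rw [← Real.log_pow, ← Real.log_mul (by linarith [hK n]) (by positivity)]
      exact Real.log_le_log (by linarith [hstat n])
        (topStat_dyn_le_coverNum_mul T C.U Φ C.cov hU n)
    calc Real.log (topStat (PartUnity.dyn T Φ n)) / n ≤ (Real.log (K n) + n * Real.log c) / n :=
          div_le_div_of_nonneg_right hlog n.cast_nonneg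
      _ = Real.log (K n) / n + Real.log c := by field_simp

lemma FinOpenCover.exists_forall_mem_range {X : Type*} [TopologicalSpace X] [CompactSpace X]
    (V : X → Set X) (hV : ∀ x, IsOpen (V x)) (hxV : ∀ x, x ∈ V x) :
    ∃ C : FinOpenCover X, ∀ j, C.U j ∈ Set.range V := by
  obtain ⟨s, hs⟩ :=
    isCompact_univ.elim_finite_subcover V hV fun x _ => Set.mem_iUnion.mpr ⟨x, hxV x⟩
  refine ⟨⟨s.card, fun j => V (s.equivFin.symm j), fun j => hV _, ?_⟩, fun j => ⟨_, rfl⟩⟩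
  refine Set.eq_univ_of_forall fun y => ?_
  obtain ⟨x, hx, hy⟩ := Set.mem_iUnion₂.mp (hs (Set.mem_univ y))
  exact Set.mem_iUnion.mpr ⟨s.equivFin ⟨x, hx⟩, by simpa using hy⟩

lemma exists_finOpenCover_supSum_le {X : Type*} [TopologicalSpace X] [CompactSpace X]
    {Φ : PartUnity X} (hΦ : Φ.Cont) {c : ℝ} (hc : 1 < c) :
    ∃ C : FinOpenCover X, ∀ j, Φ.supSum (C.U j) ≤ c := by
  set δ := (c - 1) / (Φ.n + 1)
  have hδ : 0 < δ := div_pos (by linarith) (by positivity)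
  obtain ⟨C, hC⟩ := FinOpenCover.exists_forall_mem_range
    (fun x => {y | ∀ i, Φ.f i y < Φ.f i x + δ})
    (fun x => by
      rw [Set.ofPred_forall]
      exact isOpen_iInter_of_finite fun i => isOpen_lt (hΦ i) continuous_const)
    (fun x i => lt_add_of_pos_right _ hδ)
  refine ⟨C, fun j => ?_⟩
  obtain ⟨x, hx⟩ := hC j
  have hnδ : Φ.n * δ ≤ c - 1 := by
    calc Φ.n * δ ≤ (Φ.n + 1) * δ := by linarith
      _ = c - 1 := mul_div_cancel₀ _ (by positivity)
  calc Φ.supSum (C.U j) ≤ ∑ i, (Φ.f i x + δ) :=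
        Finset.sum_le_sum fun i _ => Φ.biSup_le (fun y hy => ((hx.symm ▸ hy : _) i).le)
          (by linarith [Φ.nonneg i x])
    _ = 1 + Φ.n * δ := by
        rw [Finset.sum_add_distrib, Φ.sum_one, Finset.sum_const, Finset.card_univ,
          Fintype.card_fin, nsmul_eq_mul]
    _ ≤ c := by linarith

lemma exists_topLocEnt_le_covLocEnt_add {X : Type*} [TopologicalSpace X] [CompactSpace X]
    [Nonempty X] (T : X → X) {Φ : PartUnity X} (hΦ : Φ.Cont) {η : ℝ} (hη : 0 < η) :
    ∃ C : FinOpenCover X, topLocEnt T Φ ≤ covLocEnt T C + η := by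
  obtain ⟨C, hC⟩ := exists_finOpenCover_supSum_le hΦ (Real.one_lt_exp_iff.mpr hη)
  exact ⟨C, by simpa using topLocEnt_le_covLocEnt_add_log T Φ C hC⟩

theorem topEnt_le_topEntCov_general {X : Type*} [MetricSpace X] [CompactSpace X] [Nonempty X]
    (T : X → X) :
    (∀ Φ : PartUnity X, Φ.Cont → ((topLocEnt T Φ : ℝ) : EReal) ≤ topEntCov T) ∧
    topEnt T ≤ topEntCov T := by
  have hloc (Φ : PartUnity X) (hΦ : Φ.Cont) : ((topLocEnt T Φ : ℝ) : EReal) ≤ topEntCov T := by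
    refine EReal.ge_of_forall_gt_iff_ge.mp fun z hz => ?_
    obtain ⟨C, hC⟩ :=
      exists_topLocEnt_le_covLocEnt_add T hΦ (sub_pos.mpr (EReal.coe_lt_coe_iff.mp hz))
    exact (EReal.coe_le_coe_iff.mpr (by linarith)).trans
      (le_iSup (fun C : FinOpenCover X => ((covLocEnt T C : ℝ) : EReal)) C)
  exact ⟨hloc, iSup_le fun Φ => hloc Φ.1 Φ.2⟩

/-- `h̃_top(T) ≤ h_top(T)`: for every continuous partition of unity `Φ`,
`h̃(T,Φ)` is at most the classical topological entropy via open covers. -/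
theorem topEnt_le_topEntCov {X : Type*} [MetricSpace X] [CompactSpace X] [Nonempty X]
    [MeasurableSpace X] [BorelSpace X]
    (T : X → X) (hT : Continuous T) (hTsurj : Function.Surjective T) :
    (∀ Φ : PartUnity X, Φ.Cont → ((topLocEnt T Φ : ℝ) : EReal) ≤ topEntCov T) ∧
    topEnt T ≤ topEntCov T :=
  topEnt_le_topEntCov_general T
end
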